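/- Every graph represented by a 1-local word is a threshold graph, and conversely every threshold graph is represented by some 1-local word. -/

import Mathlib

open List

variable {α : Type*} [DecidableEq α]

/-- Two distinct letters `a` and `b` alternate in the word `w`:
their projection is an alternating sequence of `a`s and `b`s, both occurring. -/
def Alt (w : List α) (a b : α) : Prop :=
  a ≠ b ∧ a ∈ w ∧ b ∈ w ∧
    (w.filter (fun x => decide (x = a ∨ x = b))).Chain' (· ≠ ·)

/-- The word `w` represents the graph `G` with vertex set `V`:
the alphabet of `w` is `V` and adjacency coincides with alternation. -/
def Represents (w : List α) (V : Finset α) (G : SimpleGraph α) : Prop :=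
  w.toFinset = V ∧ ∀ a b : α, G.Adj a b ↔ Alt w a b

/-- A word is `k`-uniform if every letter of its alphabet occurs exactly `k` times. -/
def KUniform (k : ℕ) (w : List α) : Prop :=
  ∀ a ∈ w, w.count a = k

/-- Number of maximal blocks of `true`s in a boolean word. -/
def blockCount (l : List Bool) : ℕ :=
  ((l.zip (false :: l)).filter (fun p => p.1 && !p.2)).length

/-- `w` is `k`-local witnessed by the marking sequence `σ`. -/
def KLocalWith (k : ℕ) (w σ : List α) : Prop :=
  σ.Nodup ∧ σ.toFinset = w.toFinset ∧
    ∀ i : ℕ, blockCount (w.map (fun x => decide (x ∈ σ.take i))) ≤ k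

/-- `w` is `k`-local: some marking sequence witnesses `k`-locality. -/
def KLocal (k : ℕ) (w : List α) : Prop := ∃ σ : List α, KLocalWith k w σ

/-- The subgraph of `G` induced by `U` (as a graph on the same ambient type). -/
def inducedOn (G : SimpleGraph α) (U : Finset α) : SimpleGraph α where
  Adj a b := G.Adj a b ∧ a ∈ U ∧ b ∈ U
  symm := by
    constructor
    intro a b h
    exact ⟨h.1.symm, h.2.2, h.2.1⟩
  loopless := by
    constructor
    intro a h
    exact G.loopless.irrefl a h.1

/-- Add a vertex `v` dominating the vertex set `V` to the graph `G`. -/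
def addDom (G : SimpleGraph α) (V : Finset α) (v : α) : SimpleGraph α where
  Adj a b := G.Adj a b ∨ (a = v ∧ b ∈ V ∧ b ≠ v) ∨ (b = v ∧ a ∈ V ∧ a ≠ v)
  symm := by
    constructor
    intro a b h
    rcases h with h | h | h
    · exact Or.inl h.symm
    · exact Or.inr (Or.inr h)
    · exact Or.inr (Or.inl h)
  loopless := by
    constructor
    intro a h
    rcases h with h | h | h
    · exact G.loopless.irrefl a h
    · exact h.2.2 h.1
    · exact h.2.2 h.1

/-- Threshold graphs (with explicit vertex set): built from the empty graph
by repeatedly adding isolated or dominating vertices. -/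
inductive IsThreshold : SimpleGraph α → Finset α → Prop
  | empty : IsThreshold ⊥ ∅
  | isolated {G V v} (hv : v ∉ V) (h : IsThreshold G V) : IsThreshold G (insert v V)
  | dominating {G V v} (hv : v ∉ V) (h : IsThreshold G V) :
      IsThreshold (addDom G V v) (insert v V)

/-- Clique-width expressions over label type `L` and vertex type `α`. -/
inductive CWExpr (L α : Type*) where
  | vertex : L → α → CWExpr L α
  | union : CWExpr L α → CWExpr L α → CWExpr L α
  | connect : L → L → CWExpr L α → CWExpr L α
  | relabel : L → L → CWExpr L α → CWExpr L α

/-- The graph of all edges between label `i` and label `j` within `V` under labelling `f`. -/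
def connGraph {L : Type*} [DecidableEq L] (V : Finset α) (f : α → L) (i j : L) :
    SimpleGraph α where
  Adj a b := a ≠ b ∧ a ∈ V ∧ b ∈ V ∧ ((f a = i ∧ f b = j) ∨ (f a = j ∧ f b = i))
  symm := by
    constructor
    intro a b h
    rcases h.2.2.2 with h4 | h4
    · exact ⟨h.1.symm, h.2.2.1, h.2.1, Or.inr ⟨h4.2, h4.1⟩⟩
    · exact ⟨h.1.symm, h.2.2.1, h.2.1, Or.inl ⟨h4.2, h4.1⟩⟩
  loopless := by
    constructor
    intro a h
    exact h.1 rfl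

/-- `Builds e V f G`: the clique-width expression `e` builds the labelled graph
with vertex set `V`, labelling `f` and edge structure `G`. -/
inductive Builds {L : Type*} [DecidableEq L] : CWExpr L α → Finset α → (α → L) → SimpleGraph α → Prop
  | vertex (l : L) (v : α) : Builds (.vertex l v) {v} (fun _ => l) ⊥
  | union {e₁ e₂ V₁ V₂ f₁ f₂ G₁ G₂} (h₁ : Builds e₁ V₁ f₁ G₁) (h₂ : Builds e₂ V₂ f₂ G₂)
      (hd : _root_.Disjoint V₁ V₂) :
      Builds (.union e₁ e₂) (V₁ ∪ V₂) (fun x => if x ∈ V₁ then f₁ x else f₂ x) (G₁ ⊔ G₂)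
  | connect {e V f G} (i j : L) (hij : i ≠ j) (h : Builds e V f G) :
      Builds (.connect i j e) V f (G ⊔ connGraph V f i j)
  | relabel {e V f G} (i j : L) (h : Builds e V f G) :
      Builds (.relabel i j e) V (fun x => if f x = i then j else f x) G

/-- The clique-width of `G` (with vertex set `V`) is at most `k`. -/
def CliqueWidthLE (k : ℕ) (G : SimpleGraph α) (V : Finset α) : Prop :=
  ∃ (e : CWExpr (Fin k) α) (f : α → Fin k), Builds e V f G

/-- The crown graph `H_{n,n}`: complete bipartite minus a perfect matching. -/
def crown (n : ℕ) : SimpleGraph (Fin n ⊕ Fin n) where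
  Adj a b :=
    match a, b with
    | .inl x, .inr y => x ≠ y
    | .inr x, .inl y => x ≠ y
    | _, _ => False
  symm := by
    constructor
    intro a b h
    cases a <;> cases b <;> simp_all
    · exact fun hc => h hc.symm
    · exact fun hc => h hc.symm
  loopless := by
    constructor
    intro a h
    cases a <;> simp_all

/-- The disjoint-union-of-cliques graph associated with a partition `P` of `[n]`. -/
def partGraph {n : ℕ} (P : Finpartition (Finset.univ : Finset (Fin n))) :
    SimpleGraph (Fin n) where
  Adj x y := x ≠ y ∧ ∃ C ∈ P.parts, x ∈ C ∧ y ∈ C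
  symm := by
    constructor
    intro a b h
    obtain ⟨hne, C, hC, h1, h2⟩ := h
    exact ⟨hne.symm, C, hC, h2, h1⟩
  loopless := by
    constructor
    intro a h
    exact h.1 rfl

/-- The word associated with a partition: each block written twice in a row. -/
noncomputable def partWord {n : ℕ} (P : Finpartition (Finset.univ : Finset (Fin n))) : List (Fin n) :=
  (P.parts.toList.map (fun C => C.toList ++ C.toList)).flatten


/-
A marking sequence `σ` witnessing 1-locality never leaves an unmarked letter between two marked
ones. Let `y` be the first letter of `σ` and suppose no letter of `w` is isolated. If a letter `b`
occurs twice on the same side of an occurrence of `y` (or `b = y` occurs twice), a neighbour `z`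
of `b` occurs between these two `b`s, and at the stage where the first of `b`, `z` gets marked
one of the patterns `b z b`, `z b y` is marked–unmarked–marked. So `y` occurs once and every
other letter at most once on each side of it: `y` is dominating. Deleting an isolated or a
dominating letter keeps the word 1-local, and induction shows the graph is threshold.

Conversely, write the vertices of a threshold graph in the order of their addition as `wl` and
append a subsequence `wr` of `wl.reverse`: an isolated vertex `v` is also put at the front of
`wr`, so that when it is added its two occurrences are adjacent, while a dominating one occurs
only in `wl` and so alternates with every earlier vertex. Marking along `wl.reverse` marks a suffix of `wl` and a
prefix of `wr`, a single block.
-/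

-- `blockCountAfter prev l` counts the blocks of `true`s of `l` as if `l` followed `prev`.
def blockCountAfter : Bool → List Bool → ℕ
  | _, [] => 0
  | prev, a :: l => (a && !prev).toNat + blockCountAfter a l

lemma blockCount_eq_blockCountAfter (l : List Bool) : blockCount l = blockCountAfter false l := by
  suffices ∀ prev, ((l.zip (prev :: l)).filter (fun p => p.1 && !p.2)).length =
      blockCountAfter prev l from this false
  induction l with
  | nil => intro; rfl
  | cons a l ih =>
    intro prev
    rw [List.zip_cons_cons, List.filter_cons]
    by_cases h : (a && !prev) = true <;> simp [h, blockCountAfter, ih, Nat.add_comm]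

lemma blockCountAfter_true_le (l : List Bool) :
    blockCountAfter true l ≤ blockCountAfter false l := by
  cases l with
  | nil => rfl
  | cons a l => cases a <;> simp [blockCountAfter]

lemma blockCountAfter_false_le (l : List Bool) :
    blockCountAfter false l ≤ blockCountAfter true l + 1 := by
  cases l with
  | nil => simp [blockCountAfter]
  | cons a l => cases a <;> simp [blockCountAfter, Nat.add_comm]

lemma blockCountAfter_mono {l₁ l₂ : List Bool} (h : l₁ <+ l₂) (prev : Bool) :
    blockCountAfter prev l₁ ≤ blockCountAfter prev l₂ := by
  induction h generalizing prev with
  | slnil => rfl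
  | @cons l₁ l₂ a _ ih =>
    have := blockCountAfter_true_le l₁
    have := blockCountAfter_false_le l₁
    have := ih a
    cases a <;> cases prev <;> simp only [blockCountAfter] <;> grind
  | cons_cons a _ ih => exact Nat.add_le_add_left (ih a) _

lemma blockCount_mono {l₁ l₂ : List Bool} (h : l₁ <+ l₂) : blockCount l₁ ≤ blockCount l₂ := by
  simpa only [blockCount_eq_blockCountAfter] using blockCountAfter_mono h false

lemma blockCountAfter_replicate_false_append (prev : Bool) (n : ℕ) (l : List Bool) :
    blockCountAfter prev (List.replicate n false ++ l) ≤ blockCountAfter false l := by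
  induction n generalizing prev with
  | zero => cases prev <;> simp [blockCountAfter_true_le]
  | succ n ih => simpa [List.replicate_succ, blockCountAfter] using ih false

lemma blockCountAfter_true_replicate_true_append (n : ℕ) (l : List Bool) :
    blockCountAfter true (List.replicate n true ++ l) = blockCountAfter true l := by
  induction n with
  | zero => rfl
  | succ n ih => simpa [List.replicate_succ, blockCountAfter] using ih

lemma blockCount_replicate_le_one (a b c : ℕ) :
    blockCount (List.replicate a false ++ List.replicate b true ++ List.replicate c false) ≤ 1 := by
  have hc (prev : Bool) : blockCountAfter prev (List.replicate c false) = 0 := Nat.le_zero.mp <| by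
    simpa [blockCountAfter] using blockCountAfter_replicate_false_append prev c []
  rw [blockCount_eq_blockCountAfter, List.append_assoc]
  refine (blockCountAfter_replicate_false_append false a _).trans ?_
  cases b with
  | zero => simp [hc]
  | succ b =>
    simp [List.replicate_succ, blockCountAfter, blockCountAfter_true_replicate_true_append, hc]

lemma List.exists_take_filter_eq_filter_take {β : Type*} (p : β → Bool) (l : List β) (i : ℕ) :
    ∃ j, (l.filter p).take i = (l.take j).filter p := by
  induction l generalizing i with
  | nil => exact ⟨0, by simp⟩
  | cons a l ih =>
    by_cases ha : p a
    · cases i with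
      | zero => exact ⟨0, by simp⟩
      | succ i =>
        obtain ⟨j, hj⟩ := ih i
        exact ⟨j + 1, by simp [ha, hj]⟩
    · obtain ⟨j, hj⟩ := ih i
      exact ⟨j + 1, by simp [ha, hj]⟩

lemma List.map_decide_mem_take {σ : List α} (hσ : σ.Nodup) (i : ℕ) :
    σ.map (fun x => decide (x ∈ σ.take i)) =
      List.replicate (σ.take i).length true ++ List.replicate (σ.drop i).length false := by
  have hsplit := congrArg (List.map fun x => decide (x ∈ σ.take i)) (List.take_append_drop i σ)
  rw [← hsplit, List.map_append]
  congr 1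
  · refine List.eq_replicate_iff.mpr ⟨by simp, ?_⟩
    intro _ h
    obtain ⟨x, hx, rfl⟩ := List.mem_map.mp h
    exact decide_eq_true hx
  · refine List.eq_replicate_iff.mpr ⟨by simp, ?_⟩
    intro _ h
    obtain ⟨x, hx, rfl⟩ := List.mem_map.mp h
    exact decide_eq_false fun hx' => List.disjoint_take_drop hσ le_rfl hx' hx

lemma List.sublist_of_isChain_ne {β : Type*} {l : List β} {b z : β} (hl : l.IsChain (· ≠ ·))
    (hbz : ∀ x ∈ l, x = b ∨ x = z) (h : [b, b] <+ l) : [b, z, b] <+ l := by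
  induction l with
  | nil => simp at h
  | cons x l ih =>
    rcases List.sublist_cons_iff.mp h with h | ⟨r, hr, h⟩
    · exact (ih hl.tail (fun y hy => hbz y (by simp [hy])) h).cons x
    · obtain ⟨rfl, rfl⟩ := List.cons_eq_cons.mp hr
      cases l with
      | nil => simp at h
      | cons y l =>
        have hyb : y ≠ b := (List.isChain_cons_cons.mp hl).1.symm
        have hyz : y = z := (hbz y (by simp)).resolve_left hyb
        have hb : b ∈ l := (List.mem_cons.mp (List.singleton_sublist.mp h)).resolve_left hyb.symm
        subst hyz
        exact ((List.singleton_sublist.mpr hb).cons_cons y).cons_cons b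

lemma alt_iff {w : List α} {a b : α} : Alt w a b ↔
    a ≠ b ∧ a ∈ w ∧ b ∈ w ∧ (w.filter (fun x => decide (x = a ∨ x = b))).IsChain (· ≠ ·) :=
  Iff.rfl

lemma alt_comm {w : List α} {a b : α} : Alt w a b ↔ Alt w b a := by
  have hp : (fun x => decide (x = a ∨ x = b)) = (fun x => decide (x = b ∨ x = a)) := by
    simp only [or_comm]
  rw [alt_iff, alt_iff, hp]
  exact ⟨fun ⟨h, ha, hb, hc⟩ => ⟨h.symm, hb, ha, hc⟩,
    fun ⟨h, ha, hb, hc⟩ => ⟨h.symm, hb, ha, hc⟩⟩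

def altGraph (w : List α) : SimpleGraph α where
  Adj := Alt w
  symm := ⟨fun _ _ => alt_comm.mp⟩
  loopless := ⟨fun _ h => h.1 rfl⟩

@[simp] lemma altGraph_adj {w : List α} {a b : α} : (altGraph w).Adj a b ↔ Alt w a b := Iff.rfl

lemma represents_iff {w : List α} {V : Finset α} {G : SimpleGraph α} :
    Represents w V G ↔ w.toFinset = V ∧ altGraph w = G := by
  simp only [Represents, SimpleGraph.ext_iff, funext_iff, eq_iff_iff, altGraph_adj]
  exact and_congr_right fun _ => forall₂_congr fun _ _ => Iff.comm

lemma alt_reverse {w : List α} {a b : α} : Alt w.reverse a b ↔ Alt w a b := by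
  simp only [alt_iff, List.mem_reverse, List.filter_reverse, List.isChain_reverse, ne_comm]

lemma alt_filter_iff {w : List α} {p : α → Bool} {a b : α} (ha : p a) (hb : p b) :
    Alt (w.filter p) a b ↔ Alt w a b := by
  have hpq : (w.filter p).filter (fun x => decide (x = a ∨ x = b)) =
      w.filter (fun x => decide (x = a ∨ x = b)) := by
    rw [List.filter_filter]
    refine List.filter_congr fun x _ => ?_
    by_cases hx : x = a ∨ x = b
    · rcases hx with rfl | rfl <;> simp [ha, hb]
    · simp [hx]
  simp only [alt_iff, hpq, List.mem_filter, ha, hb, and_true]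

lemma not_alt_of_infix {w : List α} {v : α} (h : [v, v] <:+: w) (b : α) : ¬ Alt w v b := by
  rintro ⟨-, -, -, hc⟩
  have := (List.IsChain.infix hc (h.filter (fun x => decide (x = v ∨ x = b))))
  simp at this

lemma Alt.sublist_of_infix {w l : List α} {b z : α} (h : Alt w b z) (hl : l <:+: w)
    (hbb : [b, b] <+ l) : [b, z, b] <+ l := by
  let p := fun x => decide (x = b ∨ x = z)
  have hfil : [b, z, b] <+ l.filter p := by
    refine List.sublist_of_isChain_ne (h.2.2.2.infix (hl.filter p)) (by simp [p]) ?_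
    simpa [p] using hbb.filter p
  exact hfil.trans List.filter_sublist

lemma filter_eq_or_eq_of_notMem {l : List α} {y b : α} (hy : y ∉ l) :
    l.filter (fun x => decide (x = y ∨ x = b)) = List.replicate (l.count b) b := by
  rw [← List.filter_eq]
  refine List.filter_congr fun x hx => ?_
  simp [show x ≠ y by rintro rfl; exact hy hx]

lemma alt_of_count_le_one {w₁ w₃ : List α} {y b : α} (hby : b ≠ y) (hy₁ : y ∉ w₁) (hy₃ : y ∉ w₃)
    (hb : b ∈ w₁ ++ w₃) (h₁ : w₁.count b ≤ 1) (h₃ : w₃.count b ≤ 1) :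
    Alt (w₁ ++ y :: w₃) y b := by
  refine alt_iff.mpr ⟨hby.symm, by simp, by simp_all, ?_⟩
  rw [List.filter_append, List.filter_cons_of_pos (by simp), filter_eq_or_eq_of_notMem hy₁,
    filter_eq_or_eq_of_notMem hy₃]
  interval_cases w₁.count b <;> interval_cases w₃.count b <;> simp [hby, hby.symm]

@[simp] lemma addDom_adj {β : Type*} {G : SimpleGraph β} {V : Finset β} {v a b : β} :
    (addDom G V v).Adj a b ↔
      G.Adj a b ∨ (a = v ∧ b ∈ V ∧ b ≠ v) ∨ (b = v ∧ a ∈ V ∧ a ≠ v) :=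
  Iff.rfl

lemma not_alt_filter_ne (w : List α) (x b : α) : ¬ Alt (w.filter (· ≠ x)) x b :=
  fun h => by simpa using h.2.1

lemma altGraph_eq_of_isolated {w : List α} {x : α} (hx : ∀ b, ¬ Alt w x b) :
    altGraph w = altGraph (w.filter (· ≠ x)) := by
  ext a b
  simp only [altGraph_adj]
  by_cases ha : a = x
  · subst ha
    simp only [hx, not_alt_filter_ne]
  by_cases hb : b = x
  · subst hb
    rw [alt_comm, @alt_comm _ _ _ a]
    simp only [hx, not_alt_filter_ne]
  exact (alt_filter_iff (by simpa using ha) (by simpa using hb)).symm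

lemma altGraph_eq_addDom {w : List α} {y : α} (hy : ∀ b ∈ w, b ≠ y → Alt w y b) :
    altGraph w = addDom (altGraph (w.filter (· ≠ y))) (w.filter (· ≠ y)).toFinset y := by
  have hdom {b : α} : Alt w y b ↔ b ∈ w ∧ b ≠ y :=
    ⟨fun h => ⟨h.2.2.1, h.1.symm⟩, fun h => hy b h.1 h.2⟩
  ext a b
  rw [altGraph_adj, addDom_adj, altGraph_adj]
  by_cases ha : a = y
  · subst ha
    simp only [not_alt_filter_ne, false_or]
    simp [hdom]
  by_cases hb : b = y
  · subst hb
    rw [alt_comm, @alt_comm _ _ _ a]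
    simp only [not_alt_filter_ne, false_or]
    simp [hdom, ha]
  rw [alt_filter_iff (by simpa using ha) (by simpa using hb)]
  simp [ha, hb]

lemma toFinset_eq_insert_filter_ne {w : List α} {x : α} (hx : x ∈ w) :
    w.toFinset = insert x (w.filter (· ≠ x)).toFinset := by
  ext a
  by_cases ha : a = x <;> simp [ha, hx]

lemma List.toFinset_append_of_subset {l₁ l₂ : List α} (h : l₂ ⊆ l₁) :
    (l₁ ++ l₂).toFinset = l₁.toFinset := by
  ext x
  simpa using fun hx => h hx

lemma kLocalWith_append_of_sublist_reverse {wl wr : List α} (hn : wl.Nodup)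
    (hs : wr <+ wl.reverse) : KLocalWith 1 (wl ++ wr) wl.reverse := by
  refine ⟨List.nodup_reverse.mpr hn, ?_, fun i => ?_⟩
  · rw [List.toFinset_append_of_subset (List.subset_reverse.mp hs.subset), List.toFinset_reverse]
  set m := fun x => decide (x ∈ wl.reverse.take i)
  have hσ := List.map_decide_mem_take (List.nodup_reverse.mpr hn) i
  set p := (wl.reverse.take i).length
  set q := (wl.reverse.drop i).length
  have hl : wl.map m = List.replicate q false ++ List.replicate p true := by
    rw [← List.reverse_reverse (wl.map m), ← List.map_reverse, hσ]
    simp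
  obtain ⟨r₁, r₂, hr, h₁, h₂⟩ := List.sublist_append_iff.mp (hσ ▸ hs.map m)
  obtain ⟨a, -, rfl⟩ := List.sublist_replicate_iff.mp h₁
  obtain ⟨b, -, rfl⟩ := List.sublist_replicate_iff.mp h₂
  have hmarks : (wl ++ wr).map m =
      List.replicate q false ++ List.replicate (p + a) true ++ List.replicate b false := by
    rw [List.map_append, hl, hr, List.replicate_add]
    simp only [List.append_assoc]
  rw [hmarks]
  exact blockCount_replicate_le_one _ _ _

lemma altGraph_nil : altGraph ([] : List α) = ⊥ := by
  ext
  simp [alt_iff]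

lemma filter_ne_eq_self {l : List α} {v : α} (h : v ∉ l) : l.filter (· ≠ v) = l :=
  List.filter_eq_self.mpr fun x hx => by grind

lemma IsThreshold.exists_altGraph_eq {G : SimpleGraph α} {V : Finset α} (h : IsThreshold G V) :
    ∃ wl wr : List α, wl.Nodup ∧ wr <+ wl.reverse ∧ wl.toFinset = V ∧
      altGraph (wl ++ wr) = G := by
  induction h with
  | empty => exact ⟨[], [], by simp, by simp, by simp, altGraph_nil⟩
  | @isolated G V v hv _ ih =>
    obtain ⟨wl, wr, hn, hs, rfl, rfl⟩ := ih
    have hvl : v ∉ wl := by simpa using hv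
    have hvr : v ∉ wr := fun h => hvl (List.subset_reverse.mp hs.subset h)
    refine ⟨wl ++ [v], v :: wr, by simpa using hn.concat hvl, by simpa using hs.cons_cons v,
      by ext; simp, ?_⟩
    have hinfix : [v, v] <:+: wl ++ [v] ++ v :: wr := ⟨wl, wr, by simp⟩
    rw [altGraph_eq_of_isolated (not_alt_of_infix hinfix)]
    simp only [List.filter_append, List.filter_cons, List.filter_nil, filter_ne_eq_self hvl,
      filter_ne_eq_self hvr, ne_eq, not_true_eq_false, decide_false, Bool.false_eq_true, if_false,
      List.append_nil]
  | @dominating G V v hv _ ih =>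
    obtain ⟨wl, wr, hn, hs, rfl, rfl⟩ := ih
    have hvl : v ∉ wl := by simpa using hv
    have hvr : v ∉ wr := fun h => hvl (List.subset_reverse.mp hs.subset h)
    refine ⟨wl ++ [v], wr, by simpa using hn.concat hvl, by simpa using hs.cons v,
      by ext; simp, ?_⟩
    have hnr : wr.Nodup := hs.nodup (List.nodup_reverse.mpr hn)
    have hdom : ∀ b ∈ wl ++ v :: wr, b ≠ v → Alt (wl ++ v :: wr) v b := fun b hb hbv =>
      alt_of_count_le_one hbv hvl hvr (by simpa [hbv] using hb)
        (List.nodup_iff_count_le_one.mp hn b) (List.nodup_iff_count_le_one.mp hnr b)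
    rw [List.append_assoc, List.singleton_append, altGraph_eq_addDom hdom]
    simp only [List.filter_append, List.filter_cons, filter_ne_eq_self hvl,
      filter_ne_eq_self hvr, ne_eq, not_true_eq_false, decide_false, Bool.false_eq_true, if_false]
    rw [List.toFinset_append_of_subset (List.subset_reverse.mp hs.subset)]

lemma KLocalWith.mem_iff {k : ℕ} {w σ : List α} (hK : KLocalWith k w σ) {x : α} :
    x ∈ σ ↔ x ∈ w := by
  simpa using Finset.ext_iff.mp hK.2.1 x

lemma KLocalWith.filter {k : ℕ} {w σ : List α} (hK : KLocalWith k w σ) (p : α → Bool) :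
    KLocalWith k (w.filter p) (σ.filter p) := by
  refine ⟨hK.1.filter p, by ext; simp [hK.mem_iff], fun i => ?_⟩
  obtain ⟨j, hj⟩ := List.exists_take_filter_eq_filter_take p σ i
  have hmarks : (w.filter p).map (fun x => decide (x ∈ (σ.filter p).take i)) =
      (w.filter p).map (fun x => decide (x ∈ σ.take j)) :=
    List.map_congr_left fun x hx => by simp_all
  rw [hmarks]
  exact (blockCount_mono (List.filter_sublist.map _)).trans (hK.2.2 j)

-- The letter `x` is marked at stage `i` of `σ` iff `σ.idxOf x < i`.
def NoGaps (w σ : List α) : Prop :=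
  ∀ ⦃a b c : α⦄ ⦃i : ℕ⦄, [a, b, c] <+ w → σ.idxOf a < i → σ.idxOf c < i → σ.idxOf b < i

lemma NoGaps.reverse {w σ : List α} (h : NoGaps w σ) : NoGaps w.reverse σ :=
  fun _ _ _ _ habc ha hc => h (by simpa using List.sublist_reverse_iff.mp habc) hc ha

lemma KLocalWith.noGaps {w σ : List α} (hK : KLocalWith 1 w σ) : NoGaps w σ := by
  intro a b c i habc ha hc
  by_contra! hb
  have hmem {x : α} (hx : x ∈ [a, b, c]) : x ∈ σ := hK.mem_iff.mpr (habc.subset hx)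
  have hmarks : [true, false, true] <+ w.map (fun x => decide (x ∈ σ.take i)) := by
    simpa [List.mem_take_iff_idxOf_lt, hmem, ha, hc, Nat.not_lt.mpr hb] using
      habc.map (fun x => decide (x ∈ σ.take i))
  exact absurd ((blockCount_mono hmarks).trans (hK.2.2 i)) (by decide)

lemma NoGaps.count_le_one_left {w w₁ w₃ σ : List α} {y b z : α} (hgap : NoGaps w σ)
    (hσ : ∀ x ∈ w, x ∈ σ) (hy : σ.idxOf y = 0) (hw : w = w₁ ++ y :: w₃) (hbz : Alt w b z) :
    w₁.count b ≤ 1 := by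
  by_contra! h
  have hbzb : [b, z, b] <+ w₁ :=
    hbz.sublist_of_infix (hw ▸ (List.prefix_append w₁ (y :: w₃)).isInfix)
      (List.replicate_sublist_iff.mpr h)
  have hbzby : [b, z, b, y] <+ w := hw ▸ hbzb.append (List.singleton_sublist.mpr (by simp))
  have hne : σ.idxOf b ≠ σ.idxOf z := fun h => hbz.1 ((List.idxOf_inj (hσ b hbz.2.1)).mp h)
  rcases hne.lt_or_gt with hlt | hlt
  · have := hgap ((List.sublist_append_left [b, z, b] [y]).trans hbzby)
      (Nat.lt_succ_self _) (Nat.lt_succ_self _)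
    omega
  · have := hgap (((List.Sublist.refl [z, b, y]).cons b).trans hbzby)
      (Nat.lt_succ_self _) (by omega)
    omega

lemma NoGaps.count_le_one_right {w w₁ w₃ σ : List α} {y b z : α} (hgap : NoGaps w σ)
    (hσ : ∀ x ∈ w, x ∈ σ) (hy : σ.idxOf y = 0) (hw : w = w₁ ++ y :: w₃) (hbz : Alt w b z) :
    w₃.count b ≤ 1 := by
  simpa using hgap.reverse.count_le_one_left (w₁ := w₃.reverse) (w₃ := w₁.reverse)
    (by simpa using hσ) hy (by simp [hw]) (alt_reverse.mpr hbz)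

lemma KLocalWith.alt_head_of_no_isolated {w σ : List α} {y : α}
    (hK : KLocalWith 1 w (y :: σ)) (hiso : ∀ x ∈ w, ∃ z, Alt w x z) :
    ∀ b ∈ w, b ≠ y → Alt w y b := by
  have hgap := hK.noGaps
  have hσ (x : α) (hx : x ∈ w) : x ∈ y :: σ := hK.mem_iff.mpr hx
  have hy : (y :: σ).idxOf y = 0 := List.idxOf_cons_self
  have hyw : y ∈ w := hK.mem_iff.mp List.mem_cons_self
  have hy₁ : w.count y ≤ 1 := by
    by_contra! h
    obtain ⟨z, hyz⟩ := hiso y hyw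
    have hyzy := hyz.sublist_of_infix (List.infix_refl w) (List.replicate_sublist_iff.mpr h)
    have := hgap hyzy (i := 1) (by omega) (by omega)
    exact hyz.1 ((List.idxOf_inj (hσ y hyw)).mp (by omega))
  obtain ⟨w₁, w₃, rfl⟩ := List.append_of_mem hyw
  simp only [List.count_append, List.count_cons_self] at hy₁
  have hyw₁ : y ∉ w₁ := List.count_eq_zero.mp (by omega)
  have hyw₃ : y ∉ w₃ := List.count_eq_zero.mp (by omega)
  intro b hb hby
  obtain ⟨z, hbz⟩ := hiso b hb
  exact alt_of_count_le_one hby hyw₁ hyw₃ (by simpa [hby] using hb)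
    (hgap.count_le_one_left hσ hy rfl hbz) (hgap.count_le_one_right hσ hy rfl hbz)

lemma KLocalWith.isThreshold_altGraph {w σ : List α} (hK : KLocalWith 1 w σ) :
    IsThreshold (altGraph w) w.toFinset := by
  induction hlen : w.length using Nat.strong_induction_on generalizing w σ with
  | _ n ih =>
  rcases σ with _ | ⟨y, σ⟩
  · have hw : w = [] := List.eq_nil_iff_forall_not_mem.mpr fun x hx => by
      simpa using hK.mem_iff.mpr hx
    rw [hw, altGraph_nil]
    exact IsThreshold.empty
  have hyw : y ∈ w := hK.mem_iff.mp List.mem_cons_self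
  have hdel (x : α) (hx : x ∈ w) :
      IsThreshold (altGraph (w.filter (· ≠ x))) (w.filter (· ≠ x)).toFinset :=
    ih _ (hlen ▸ List.length_filter_lt_length_iff_exists.mpr ⟨x, hx, by simp⟩) (hK.filter _) rfl
  by_cases hiso : ∃ x ∈ w, ∀ b, ¬ Alt w x b
  · obtain ⟨x, hx, hxiso⟩ := hiso
    rw [altGraph_eq_of_isolated hxiso, toFinset_eq_insert_filter_ne hx]
    exact (hdel x hx).isolated (by simp)
  · push Not at hiso
    rw [altGraph_eq_addDom (hK.alt_head_of_no_isolated hiso), toFinset_eq_insert_filter_ne hyw]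
    exact (hdel y hyw).dominating (by simp)

/-- A graph is represented by a `1`-local word iff it is a threshold
graph. -/
theorem stmt15 {α : Type*} [DecidableEq α] :
    (∀ (w : List α) (V : Finset α) (G : SimpleGraph α),
        KLocal 1 w → Represents w V G → IsThreshold G V) ∧
    (∀ (V : Finset α) (G : SimpleGraph α), IsThreshold G V →
        ∃ w : List α, KLocal 1 w ∧ Represents w V G) := by
  constructor
  · rintro w V G ⟨σ, hK⟩ hR
    obtain ⟨rfl, rfl⟩ := represents_iff.mp hR
    exact hK.isThreshold_altGraph
  · intro V G hG
    obtain ⟨wl, wr, hn, hs, rfl, rfl⟩ := hG.exists_altGraph_eq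
    refine ⟨wl ++ wr, ⟨wl.reverse, kLocalWith_append_of_sublist_reverse hn hs⟩, ?_⟩
    exact represents_iff.mpr
      ⟨List.toFinset_append_of_subset (List.subset_reverse.mp hs.subset), rfl⟩
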